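/- arXiv:1010.5117 — 2 statements merged into one kernel-verified Lean document; each statement's English description precedes it below -/
import Mathlib

section
/- Let A be a finite-dimensional semisimple complex algebra isomorphic to a product M_{n₁}(ℂ) × ... × M_{n_k}(ℂ), and let D be an additive derivation on A whose restriction to the center is zero. Then D is ℂ-linear and inner: there exists a ∈ A with D(x) = ax - xa for all x ∈ A. -/
/-!
Multiplying by the central element `c • 1` shows that `D` is `ℂ`-linear. Since `D` kills the
central idempotents `Pi.single i 1`, it acts componentwise, so it suffices to treat one matrix
algebra. There, with matrix units `e u v` and a fixed index `o`, the elements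
`a = ∑ p, D (e p o) * e o p` and `b = ∑ p, e p o * D (e o p)` satisfy `a + b = D 1 = 0`, and
`D (e u v) = D (e u o) * e o v + e u o * D (e o v) = a * e u v + e u v * b`.
-/

theorem map_smul_of_map_center_eq_zero {R A : Type*} [CommSemiring R] [Semiring A]
    [Algebra R A] (D : A → A) (hleib : ∀ x y, D (x * y) = D x * y + x * D y)
    (hcenter : ∀ z ∈ Set.center A, D z = 0) (c : R) (x : A) : D (c • x) = c • D x := by
  rw [Algebra.smul_def, hleib, hcenter _ (Set.algebraMap_mem_center c), zero_mul, zero_add,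
    ← Algebra.smul_def]

def DerivationsVanishingOnCenterAreInner (A : Type*) [Ring A] : Prop :=
  ∀ D : A →+ A, (∀ x y, D (x * y) = D x * y + x * D y) → (∀ z ∈ Set.center A, D z = 0) →
    ∃ a, ∀ x, D x = a * x - x * a

namespace Matrix

variable {m R : Type*} [Fintype m] [DecidableEq m] [CommRing R]

theorem derivationsVanishingOnCenterAreInner :
    DerivationsVanishingOnCenterAreInner (Matrix m m R) := by
  intro D hleib hcenter
  rcases isEmpty_or_nonempty m with _ | ⟨⟨o⟩⟩
  · exact ⟨0, fun _ => Subsingleton.elim _ _⟩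
  let E (u v : m) : Matrix m m R := single u v 1
  have hE (u v w : m) : E u v * E v w = E u w := by simp [E]
  have hE0 (u v p q : m) (h : v ≠ p) : E u v * E p q = 0 := by simp [E, h]
  set a := ∑ p, D (E p o) * E o p
  set b := ∑ p, E p o * D (E o p)
  have hab : a + b = 0 := by
    rw [← Finset.sum_add_distrib]
    simp_rw [← hleib, hE]
    rw [← map_sum, sum_single_one]
    exact hcenter 1 Set.one_mem_center
  have haE (u v : m) : a * E u v = D (E u o) * E o v := by
    rw [Finset.sum_mul, Finset.sum_eq_single u]
    · rw [mul_assoc, hE]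
    · intro p _ hp
      rw [mul_assoc, hE0 _ _ _ _ hp, mul_zero]
    · simp
  have hEb (u v : m) : E u v * b = E u o * D (E o v) := by
    rw [Finset.mul_sum, Finset.sum_eq_single v]
    · rw [← mul_assoc, hE]
    · intro p _ hp
      rw [← mul_assoc, hE0 _ _ _ _ hp.symm, zero_mul]
    · simp
  have hDE (u v : m) : D (E u v) = a * E u v - E u v * a := by
    have hEa : E u v * a = -(E u v * b) := by rw [eq_neg_of_add_eq_zero_left hab, mul_neg]
    rw [hEa, sub_neg_eq_add, haE, hEb, ← hleib, hE]
  refine ⟨a, fun x => ?_⟩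
  induction x using Matrix.induction_on' with
  | h_zero => simp
  | h_add p q hp hq =>
    rw [map_add, hp, hq]
    noncomm_ring
  | h_std_basis u v c =>
    have hc : single u v c = c • E u v := by rw [smul_single, smul_eq_mul, mul_one]
    rw [hc, map_smul_of_map_center_eq_zero D hleib hcenter, hDE, smul_sub, mul_smul_comm,
      smul_mul_assoc]

end Matrix

namespace Pi

variable {ι : Type*} [DecidableEq ι] {A : ι → Type*} [∀ i, Ring (A i)]

theorem single_mem_center {i : ι} {z : A i} (hz : z ∈ Set.center (A i)) :
    Pi.single i z ∈ Set.center (∀ i, A i) := by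
  rw [Set.center_pi]
  intro j _
  by_cases h : j = i
  · subst h
    simpa using hz
  · simp [h, Set.zero_mem_center]

theorem apply_eq_apply_single_of_map_center_eq_zero (D : (∀ i, A i) → ∀ i, A i)
    (hleib : ∀ x y, D (x * y) = D x * y + x * D y)
    (hcenter : ∀ z ∈ Set.center (∀ i, A i), D z = 0) (x : ∀ i, A i) (i : ι) :
    D x i = D (Pi.single i (x i)) i := by
  have hunit : D (Pi.single i (1 : A i)) = 0 := hcenter _ (single_mem_center Set.one_mem_center)
  calc D x i = (Pi.single i (1 : A i) * D x) i := by simp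
    _ = D (Pi.single i (1 : A i) * x) i := by rw [hleib, hunit, zero_mul, zero_add]
    _ = D (Pi.single i (x i)) i := by rw [← single_mul_left, one_mul]

theorem derivationsVanishingOnCenterAreInner
    (h : ∀ i, DerivationsVanishingOnCenterAreInner (A i)) :
    DerivationsVanishingOnCenterAreInner (∀ i, A i) := by
  intro D hleib hcenter
  let Dc (i : ι) : A i →+ A i := (Pi.evalAddMonoidHom A i).comp (D.comp (AddMonoidHom.single A i))
  have hDc (i : ι) (u : A i) : Dc i u = D (Pi.single i u) i := rfl
  choose a ha using fun i => h i (Dc i) (fun u v => by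
      simp only [hDc, single_mul, hleib, Pi.add_apply, Pi.mul_apply, single_eq_same])
    (fun z hz => by rw [hDc, hcenter _ (single_mem_center hz), Pi.zero_apply])
  refine ⟨a, fun x => funext fun i => ?_⟩
  rw [apply_eq_apply_single_of_map_center_eq_zero D hleib hcenter, ← hDc, ha]
  rfl

end Pi

theorem derivation_zero_on_center_is_inner
    (k : ℕ) (n : Fin k → ℕ)
    (D : (∀ i, Matrix (Fin (n i)) (Fin (n i)) ℂ) → (∀ i, Matrix (Fin (n i)) (Fin (n i)) ℂ))
    (hadd : ∀ x y, D (x + y) = D x + D y)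
    (hleib : ∀ x y, D (x * y) = D x * y + x * D y)
    (hcenter : ∀ z ∈ Set.center (∀ i, Matrix (Fin (n i)) (Fin (n i)) ℂ), D z = 0) :
    (∀ (lam : ℂ) x, D (lam • x) = lam • D x) ∧
    ∃ a, ∀ x, D x = a * x - x * a :=
  ⟨map_smul_of_map_center_eq_zero D hleib hcenter,
    Pi.derivationsVanishingOnCenterAreInner (fun _ => Matrix.derivationsVanishingOnCenterAreInner)
      (AddMonoidHom.mk' D hadd) hleib hcenter⟩
end

section
/- Every additive derivation D on Mₙ(ℂ) decomposes uniquely as D = D_a + D_δ, where D_a(x) = ax - xa is inner (a ∈ Mₙ(ℂ) with trace zero, say, for uniqueness up to center) and D_δ is the entrywise application of an additive derivation δ : ℂ → ℂ. Uniqueness: if D_a + D_δ = D_{a'} + D_{δ'} with a, a' ∈ Mₙ(ℂ) and δ, δ' additive derivations on ℂ, then δ = δ' and a - a' is a scalar matrix. -/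
/-! Fix an index `z` and write `E i j` for the matrix units. The matrix
`b = ∑ k, D (E k z) * E z k` satisfies `D (E i j) = b * E i j - E i j * b`, so `D - ad b` is an
additive derivation killing every matrix unit. Such a derivation `D'` satisfies
`D' (single i j c) = E i z * D' (single z z c) * E z j`, i.e. it acts entrywise through
`δ c = D' (single z z c) z z`, and `δ` inherits the Leibniz rule from `D'`.
For uniqueness, evaluating at scalar matrices gives `δ = δ'`, after which `a - a'` commutes with
every matrix and is therefore scalar. -/

/-- Entrywise application of a map `δ : ℂ → ℂ` to a matrix. -/
def entrywise {n : ℕ} (δ : ℂ → ℂ) (x : Matrix (Fin n) (Fin n) ℂ) :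
    Matrix (Fin n) (Fin n) ℂ :=
  Matrix.of fun i j => δ (x i j)

open Matrix

section

variable {ι R : Type*} [Fintype ι] [DecidableEq ι]

section Ring

variable [Ring R]

lemma single_one_mul_single_one (i j k l : ι) :
    (single i j 1 : Matrix ι ι R) * single k l 1 = if j = k then single i l 1 else 0 := by
  split_ifs with h
  · subst h; simp
  · exact single_mul_single_of_ne _ _ _ _ h _

def innerComponent (D : Matrix ι ι R → Matrix ι ι R) (z : ι) : Matrix ι ι R :=
  ∑ k, D (single k z 1) * single z k 1

lemma apply_single_one_eq_commutator (D : Matrix ι ι R →+ Matrix ι ι R)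
    (hD : ∀ x y, D (x * y) = D x * y + x * D y) (z i j : ι) :
    D (single i j 1) = innerComponent D z * single i j 1 - single i j 1 * innerComponent D z := by
  have hleft : innerComponent D z * single i j 1 = D (single i z 1) * single z j 1 := by
    simp only [innerComponent, Finset.sum_mul, mul_assoc, single_one_mul_single_one, mul_ite,
      mul_zero, Finset.sum_ite_eq', Finset.mem_univ, if_true]
  have hright :
      single i j 1 * innerComponent D z = D (single i z 1) * single z j 1 - D (single i j 1) := by
    calc single i j 1 * innerComponent D z
        = ∑ k, (D (single i j 1 * single k z 1) - D (single i j 1) * single k z 1) *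
            single z k 1 := by
          simp only [innerComponent, Finset.mul_sum, hD, ← mul_assoc, add_sub_cancel_left]
      _ = D (single i z 1) * single z j 1 - D (single i j 1) * ∑ k, single k k 1 := by
          simp only [sub_mul, Finset.sum_sub_distrib, mul_assoc, single_one_mul_single_one,
            Finset.mul_sum]
          simp [apply_ite D, ite_mul]
      _ = _ := by rw [sum_single_one, mul_one]
  rw [hleft, hright, sub_sub_cancel]

lemma apply_single_of_apply_single_one_eq_zero (D : Matrix ι ι R →+ Matrix ι ι R)
    (hD : ∀ x y, D (x * y) = D x * y + x * D y) (hunit : ∀ i j, D (single i j 1) = 0)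
    (z i j : ι) (c : R) : D (single i j c) = single i j (D (single z z c) z z) := by
  calc D (single i j c) = D (single i z 1 * single z z c * single z j 1) := by simp
    _ = single i z 1 * D (single z z c) * single z j 1 := by
      rw [hD, hD, hunit, hunit, zero_mul, zero_add, mul_zero, add_zero]
    _ = _ := by simp

lemma exists_eq_mapMatrix_of_apply_single_one_eq_zero [Nonempty ι]
    (D : Matrix ι ι R →+ Matrix ι ι R) (hD : ∀ x y, D (x * y) = D x * y + x * D y)
    (hunit : ∀ i j, D (single i j 1) = 0) :
    ∃ δ : R →+ R, (∀ x y, δ (x * y) = δ x * y + x * δ y) ∧ D = δ.mapMatrix := by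
  obtain ⟨z⟩ := ‹Nonempty ι›
  let δ : R →+ R := (entryAddMonoidHom R z z).comp (D.comp (singleAddMonoidHom z z))
  have hsingle (i j : ι) (c : R) : D (single i j c) = single i j (δ c) :=
    apply_single_of_apply_single_one_eq_zero D hD hunit z i j c
  refine ⟨δ, fun x y => ?_, ext_addMonoidHom fun i j => AddMonoidHom.ext fun c => ?_⟩
  · have h := congr($(hD (single z z x) (single z z y)) z z)
    simpa [hsingle] using h
  · simp [hsingle]

theorem exists_eq_commutator_add_map [Nonempty ι] (D : Matrix ι ι R →+ Matrix ι ι R)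
    (hD : ∀ x y, D (x * y) = D x * y + x * D y) :
    ∃ (a : Matrix ι ι R) (δ : R →+ R), (∀ x y, δ (x * y) = δ x * y + x * δ y) ∧
      ∀ x, D x = (a * x - x * a) + x.map δ := by
  obtain ⟨z⟩ := ‹Nonempty ι›
  set a := innerComponent D z
  let D' : Matrix ι ι R →+ Matrix ι ι R :=
    D - (AddMonoidHom.mulLeft a - AddMonoidHom.mulRight a)
  have hD' (x y) : D' (x * y) = D' x * y + x * D' y := by
    simp only [D', AddMonoidHom.sub_apply, AddMonoidHom.coe_mulLeft, AddMonoidHom.coe_mulRight, hD]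
    noncomm_ring
  have hunit (i j) : D' (single i j 1) = 0 := by
    simp [D', apply_single_one_eq_commutator D hD z i j, a]
  obtain ⟨δ, hδ, hD'δ⟩ := exists_eq_mapMatrix_of_apply_single_one_eq_zero D' hD' hunit
  refine ⟨a, δ, hδ, fun x => ?_⟩
  rw [← AddMonoidHom.mapMatrix_apply, ← hD'δ]
  simp [D']

end Ring

theorem eq_and_exists_sub_eq_smul_one_of_commutator_add_map_eq [CommRing R] [Nonempty ι]
    {a a' : Matrix ι ι R} {δ δ' : R → R}
    (h : ∀ x, (a * x - x * a) + x.map δ = (a' * x - x * a') + x.map δ') :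
    δ = δ' ∧ ∃ c : R, a - a' = c • 1 := by
  obtain ⟨z⟩ := ‹Nonempty ι›
  have hδ : δ = δ' := funext fun c => by
    simpa using congr($(h (c • 1)) z z)
  subst hδ
  have hcomm (x : Matrix ι ι R) : Commute x (a - a') := by
    have := add_right_cancel (h x)
    simp only [Commute, SemiconjBy, mul_sub, sub_mul]
    rw [sub_eq_sub_iff_sub_eq_sub] at this
    exact this.symm
  obtain ⟨c, hc⟩ := mem_range_scalar_iff_commute_single'.mpr fun i j => hcomm _
  exact ⟨rfl, c, by rw [← hc, scalar_apply, smul_one_eq_diagonal]⟩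

end

theorem additive_derivation_decomposition_matrix
    (n : ℕ) (hn : 0 < n)
    (D : Matrix (Fin n) (Fin n) ℂ → Matrix (Fin n) (Fin n) ℂ)
    (hadd : ∀ x y, D (x + y) = D x + D y)
    (hleib : ∀ x y, D (x * y) = D x * y + x * D y) :
    (∃ (a : Matrix (Fin n) (Fin n) ℂ) (δ : ℂ → ℂ),
      (∀ x y : ℂ, δ (x + y) = δ x + δ y) ∧
      (∀ x y : ℂ, δ (x * y) = δ x * y + x * δ y) ∧
      ∀ x, D x = (a * x - x * a) + entrywise δ x) ∧
    (∀ (a a' : Matrix (Fin n) (Fin n) ℂ) (δ δ' : ℂ → ℂ),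
      (∀ x y : ℂ, δ (x + y) = δ x + δ y) →
      (∀ x y : ℂ, δ (x * y) = δ x * y + x * δ y) →
      (∀ x y : ℂ, δ' (x + y) = δ' x + δ' y) →
      (∀ x y : ℂ, δ' (x * y) = δ' x * y + x * δ' y) →
      (∀ x, (a * x - x * a) + entrywise δ x = (a' * x - x * a') + entrywise δ' x) →
      δ = δ' ∧ ∃ lam : ℂ, a - a' = lam • (1 : Matrix (Fin n) (Fin n) ℂ)) := by
  have : Nonempty (Fin n) := Fin.pos_iff_nonempty.mp hn
  obtain ⟨a, δ, hδ, hDa⟩ := exists_eq_commutator_add_map (AddMonoidHom.mk' D hadd) hleib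
  exact ⟨⟨a, δ, map_add δ, hδ, hDa⟩,
    fun a a' δ δ' _ _ _ _ h => eq_and_exists_sub_eq_smul_one_of_commutator_add_map_eq h⟩
end
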